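/- Let X be an affine GL-scheme. Then the orbit space X^orb (the set of generalized orbits with the quotient topology) is a spectral topological space: it is sober, its quasi-compact open subsets form a basis, and the intersection of any two quasi-compact opens is quasi-compact. -/

import Mathlib

/-!
The quotient map `π : Spec R → X^orb` is open, since `π⁻¹(π U)` is the `GL`-saturation
`⋃ g, g⁻¹ U` of `U`. Hence the sets `π(D(f))` form a basis of quasi-compact opens. The heart of
the matter is `π(D(f)) ∩ π(D(h)) = π(D(fh))`: if some translate of `f` and some translate of `h`
avoid a prime `x`, then a single translate avoids it for both. For `g ∈ GLₙ` and a functional `ℓ`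
vanishing on `x`, the value `ℓ(g • f)` is a polynomial in the entries of `g` because `R` is a
polynomial representation, and `GLₙ` is irreducible over an infinite field. This identity gives
quasi-separatedness, and it also makes `π⁻¹` of an irreducible set irreducible, so generic points
of the sober space `Spec R` descend to `X^orb`. Finally `π⁻¹(closure {π x})` is the orbit closure
of `x`, which gives `T0`.
-/

open TensorProduct PiTensorProduct

noncomputable section

/-- `𝐕 = ⋃ₙ Kⁿ`, the standard representation of the infinite general linear group:
the `K`-vector space with countable basis `e 0, e 1, e 2, …`. -/
abbrev Vec (K : Type) [Field K] : Type := ℕ →₀ K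

/-- The `i`-th standard basis vector of `𝐕`. -/
def ee (K : Type) [Field K] (i : ℕ) : Vec K := Finsupp.single i 1

/-- The infinite general linear group `GL = ⋃ₙ GLₙ(K)`, realized as the set of linear
automorphisms of `𝐕` which, for some `N`, fix all basis vectors `e i` with `i ≥ N` and
preserve the span of `e 0, …, e (N-1)`. -/
def GLSet (K : Type) [Field K] : Set (Vec K ≃ₗ[K] Vec K) :=
  {g | ∃ N : ℕ,
    (∀ i, N ≤ i → g (ee K i) = ee K i ∧ g.symm (ee K i) = ee K i) ∧
    (∀ i, i < N → ((g (ee K i)).support : Set ℕ) ⊆ Set.Iio N ∧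
      ((g.symm (ee K i)).support : Set ℕ) ⊆ Set.Iio N)}

/-- The subgroup `GLₙ(K) ⊆ GL`: elements of `GL` witnessed by the given `N`. -/
def GLn (K : Type) [Field K] (N : ℕ) : Set (Vec K ≃ₗ[K] Vec K) :=
  {g | (∀ i, N ≤ i → g (ee K i) = ee K i ∧ g.symm (ee K i) = ee K i) ∧
    (∀ i, i < N → ((g (ee K i)).support : Set ℕ) ⊆ Set.Iio N ∧
      ((g.symm (ee K i)).support : Set ℕ) ⊆ Set.Iio N)}

variable (K : Type) [Field K]

/-- A `K`-module `R` with a `GL`-action (given by `act`) is a *polynomial representation*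
if it embeds `GL`-equivariantly into a direct sum of tensor powers of `𝐕`. -/
def IsPolyRep (R : Type) [AddCommGroup R] [Module K R]
    (act : (Vec K ≃ₗ[K] Vec K) → (R →ₗ[K] R)) : Prop :=
  ∃ (ι : Type) (d : ι → ℕ)
    (emb : R →ₗ[K] DirectSum ι (fun i => ⨂[K] (_j : Fin (d i)), Vec K)),
      Function.Injective emb ∧
      ∀ g ∈ GLSet K, ∀ x : R,
        emb (act g x) =
          DFinsupp.mapRange.linearMap
            (fun i => PiTensorProduct.map (fun _ : Fin (d i) => g.toLinearMap)) (emb x)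

variable (R : Type) [CommRing R] [Algebra K R]
variable (act : (Vec K ≃ₗ[K] Vec K) → (R ≃ₐ[K] R))

/-- The underlying polynomial-representation condition for the `GL`-algebra `R`. -/
def IsGLAlgebra : Prop :=
  (act 1 = AlgEquiv.refl) ∧
  (∀ g ∈ GLSet K, ∀ h ∈ GLSet K, act (g * h) = (act h).trans (act g)) ∧
  IsPolyRep K R (fun g => (act g).toLinearMap)

/-- `R` is finitely `GL`-generated. -/
def IsFinGLGen : Prop :=
  ∃ s : Finset R,
    Algebra.adjoin K (⋃ f ∈ s, {y : R | ∃ g ∈ GLSet K, y = act g f}) = ⊤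

/-- The homeomorphism of `X = Spec R` induced by `g ∈ GL`. -/
def pt (g : Vec K ≃ₗ[K] Vec K) : PrimeSpectrum R → PrimeSpectrum R :=
  PrimeSpectrum.comap (act g).toRingEquiv.toRingHom

/-- A subset of `X = Spec R` is `GL`-stable. -/
def GLStable (S : Set (PrimeSpectrum R)) : Prop :=
  ∀ g ∈ GLSet K, pt K R act g ⁻¹' S = S

/-- The orbit closure `O̅ₓ`: the smallest closed `GL`-stable subset containing `x`. -/
def orbitClosure (x : PrimeSpectrum R) : Set (PrimeSpectrum R) :=
  ⋂₀ {Z | IsClosed Z ∧ GLStable K R act Z ∧ x ∈ Z}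

/-- The generalized orbit `Oₓ` of a point. -/
def genOrbit (x : PrimeSpectrum R) : Set (PrimeSpectrum R) :=
  {y | orbitClosure K R act y = orbitClosure K R act x}

/-- `x` is a `GL`-fixed point of `X`. -/
def isFixedPt (x : PrimeSpectrum R) : Prop :=
  ∀ g ∈ GLSet K, pt K R act g x = x

/-- The setoid whose classes are the generalized orbits. -/
def orbSetoid : Setoid (PrimeSpectrum R) :=
  ⟨fun x y => orbitClosure K R act x = orbitClosure K R act y,
    ⟨fun _ => rfl, Eq.symm, Eq.trans⟩⟩

/-- The orbit space `X^orb` with the quotient topology. -/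
abbrev OrbSpace : Type := Quotient (orbSetoid K R act)

/-- The quotient map `π : X → X^orb`. -/
def orbMap (x : PrimeSpectrum R) : OrbSpace K R act :=
  Quotient.mk (orbSetoid K R act) x

end

open Matrix

noncomputable section Block

variable {K : Type} [Field K] {N : ℕ}

def Vec.restrict (N : ℕ) : Vec K →ₗ[K] Fin N → K :=
  LinearMap.pi fun i => Finsupp.lapply (i : ℕ)

def Vec.extend (N : ℕ) : (Fin N → K) →ₗ[K] Vec K :=
  Fintype.linearCombination K fun i : Fin N => ee K i

@[simp]
lemma Vec.restrict_apply (v : Vec K) (i : Fin N) : Vec.restrict N v i = v i := rfl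

lemma ee_apply (i j : ℕ) : ee K i j = if i = j then 1 else 0 := by
  simp [ee, Finsupp.single_apply]

lemma Vec.extend_apply (w : Fin N → K) (j : ℕ) :
    Vec.extend N w j = if h : j < N then w ⟨j, h⟩ else 0 := by
  simp only [Vec.extend, Fintype.linearCombination_apply, Finsupp.finsetSum_apply,
    Finsupp.smul_apply, ee_apply, smul_eq_mul, mul_ite, mul_one, mul_zero]
  split_ifs with h
  · rw [Finset.sum_eq_single ⟨j, h⟩ (fun i _ hi => if_neg fun e => hi (Fin.ext e)) (by simp)]
    simp
  · exact Finset.sum_eq_zero fun i _ => if_neg fun e : (i : ℕ) = j => h (e ▸ i.2)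

@[simp]
lemma Vec.restrict_extend (w : Fin N → K) : Vec.restrict N (Vec.extend N w) = w := by
  ext i; simp [Vec.extend_apply]

lemma Vec.extend_mem_supported (w : Fin N → K) :
    Vec.extend N w ∈ Finsupp.supported K K (Set.Iio N) := by
  rw [Finsupp.mem_supported']
  intro j hj
  exact (Vec.extend_apply w j).trans (dif_neg hj)

lemma Vec.extend_restrict {v : Vec K} (hv : v ∈ Finsupp.supported K K (Set.Iio N)) :
    Vec.extend N (Vec.restrict N v) = v := by
  ext j
  rw [Vec.extend_apply]
  split_ifs with h
  · rfl
  · exact ((Finsupp.mem_supported' K v).mp hv j h).symm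

lemma Vec.extend_single (i : Fin N) : Vec.extend N (Pi.single i 1) = ee K i := by
  simp [Vec.extend]

lemma Vec.restrict_ee_of_le {i : ℕ} (hi : N ≤ i) : Vec.restrict N (ee K i) = 0 := by
  ext j; simp [ee_apply]; omega

/-- `A` acting on `span {e 0, …, e (N-1)}`, extended by the identity on the other `e i`. -/
def blockMap (N : ℕ) : Matrix (Fin N) (Fin N) K →* Module.End K (Vec K) where
  toFun A := LinearMap.id - Vec.extend N ∘ₗ Vec.restrict N +
    Vec.extend N ∘ₗ A.toLin' ∘ₗ Vec.restrict N
  map_one' := LinearMap.ext fun v => by simp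
  map_mul' A B := LinearMap.ext fun v => by simp [Matrix.toLin'_mul, Module.End.mul_apply]

lemma blockMap_apply (A : Matrix (Fin N) (Fin N) K) (v : Vec K) :
    blockMap N A v = v - Vec.extend N (Vec.restrict N v) + Vec.extend N (A *ᵥ Vec.restrict N v) :=
  rfl

lemma blockMap_extend (A : Matrix (Fin N) (Fin N) K) (w : Fin N → K) :
    blockMap N A (Vec.extend N w) = Vec.extend N (A *ᵥ w) := by
  simp [blockMap_apply]

lemma blockMap_ee_of_le (A : Matrix (Fin N) (Fin N) K) {i : ℕ} (hi : N ≤ i) :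
    blockMap N A (ee K i) = ee K i := by
  simp [blockMap_apply, Vec.restrict_ee_of_le hi]

lemma blockMap_injective : Function.Injective (blockMap (K := K) N) := by
  intro A B h
  ext i j
  have := congr(Vec.restrict N ($h (Vec.extend N (Pi.single j 1))) i)
  simpa only [blockMap_extend, Vec.restrict_extend, Matrix.mulVec_single_one, Matrix.col_apply]
    using this

def blockEmbed (N : ℕ) : GL (Fin N) K →* (Vec K ≃ₗ[K] Vec K) :=
  (LinearMap.GeneralLinearGroup.generalLinearEquiv K (Vec K)).toMonoidHom.comp
    (Units.map (blockMap N))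

lemma blockEmbed_apply (A : GL (Fin N) K) (v : Vec K) : blockEmbed N A v = blockMap N A v := rfl

lemma toLinearMap_blockEmbed (A : GL (Fin N) K) :
    (blockEmbed N A).toLinearMap = blockMap N A := rfl

lemma blockEmbed_ee_of_le (A : GL (Fin N) K) {i : ℕ} (hi : N ≤ i) :
    blockEmbed N A (ee K i) = ee K i :=
  blockMap_ee_of_le _ hi

lemma blockEmbed_ee_mem_supported (A : GL (Fin N) K) {i : ℕ} (hi : i < N) :
    blockEmbed N A (ee K i) ∈ Finsupp.supported K K (Set.Iio N) := by
  rw [blockEmbed_apply, ← Vec.extend_single ⟨i, hi⟩, blockMap_extend]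
  exact Vec.extend_mem_supported _

lemma symm_blockEmbed (A : GL (Fin N) K) : (blockEmbed N A).symm = blockEmbed N A⁻¹ := by
  rw [map_inv]; rfl

lemma blockEmbed_mem_GLn (A : GL (Fin N) K) : blockEmbed N A ∈ GLn K N := by
  refine ⟨fun i hi => ⟨blockEmbed_ee_of_le A hi, ?_⟩,
    fun i hi => ⟨blockEmbed_ee_mem_supported A hi, ?_⟩⟩
  · rw [symm_blockEmbed]; exact blockEmbed_ee_of_le _ hi
  · rw [symm_blockEmbed]; exact blockEmbed_ee_mem_supported _ hi

lemma exists_blockMap_eq {g : Vec K →ₗ[K] Vec K} (hfix : ∀ i, N ≤ i → g (ee K i) = ee K i)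
    (hsupp : ∀ i, i < N → g (ee K i) ∈ Finsupp.supported K K (Set.Iio N)) :
    ∃ A, blockMap N A = g := by
  refine ⟨Matrix.of fun i j => g (ee K j) i, Finsupp.basisSingleOne.ext fun j => ?_⟩
  change blockMap N _ (ee K j) = g (ee K j)
  by_cases hj : j < N
  · rw [← Vec.extend_single ⟨j, hj⟩, blockMap_extend, Matrix.mulVec_single_one, Vec.extend_single]
    exact Vec.extend_restrict (hsupp j hj)
  · exact (blockMap_ee_of_le _ (not_lt.mp hj)).trans (hfix j (not_lt.mp hj)).symm

lemma GLn_eq_range : GLn K N = Set.range (blockEmbed (K := K) N) := by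
  refine subset_antisymm (fun g hg => ?_) (Set.range_subset_iff.mpr blockEmbed_mem_GLn)
  obtain ⟨A, hA⟩ := exists_blockMap_eq (fun i hi => (hg.1 i hi).1) (fun i hi => (hg.2 i hi).1)
  obtain ⟨B, hB⟩ := exists_blockMap_eq (g := g.symm.toLinearMap) (fun i hi => (hg.1 i hi).2)
    (fun i hi => (hg.2 i hi).2)
  have hAB : A * B = 1 := blockMap_injective <| LinearMap.ext fun v => by
    simp [hA, hB, Module.End.mul_apply]
  have hBA : B * A = 1 := blockMap_injective <| LinearMap.ext fun v => by
    simp [hA, hB, Module.End.mul_apply]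
  exact ⟨⟨A, B, hAB, hBA⟩, LinearEquiv.toLinearMap_injective hA⟩

lemma GLn_mono {N M : ℕ} (h : N ≤ M) : GLn K N ⊆ GLn K M := by
  rintro g ⟨hfix, hsupp⟩
  refine ⟨fun i hi => hfix i (h.trans hi), fun i hi => ?_⟩
  rcases lt_or_ge i N with hiN | hiN
  · exact ⟨(hsupp i hiN).1.trans (Set.Iio_subset_Iio h),
      (hsupp i hiN).2.trans (Set.Iio_subset_Iio h)⟩
  · have hee : ((ee K i).support : Set ℕ) ⊆ Set.Iio M := by simp [ee, hi]
    rw [(hfix i hiN).1, (hfix i hiN).2]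
    exact ⟨hee, hee⟩

lemma exists_mem_GLn_of_mem_GLSet {g h : Vec K ≃ₗ[K] Vec K} (hg : g ∈ GLSet K)
    (hh : h ∈ GLSet K) : ∃ N, g ∈ GLn K N ∧ h ∈ GLn K N := by
  obtain ⟨N, hgN⟩ := hg
  obtain ⟨M, hhM⟩ := hh
  exact ⟨max N M, GLn_mono (le_max_left N M) hgN, GLn_mono (le_max_right N M) hhM⟩

lemma blockEmbed_mem_GLSet (A : GL (Fin N) K) : blockEmbed N A ∈ GLSet K :=
  ⟨N, blockEmbed_mem_GLn A⟩

end Block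

def GLSubgroup (K : Type) [Field K] : Subgroup (Vec K ≃ₗ[K] Vec K) where
  carrier := GLSet K
  one_mem' := map_one (blockEmbed (K := K) 0) ▸ blockEmbed_mem_GLSet 1
  mul_mem' {g h} hg hh := by
    obtain ⟨N, hgN, hhN⟩ := exists_mem_GLn_of_mem_GLSet hg hh
    rw [GLn_eq_range] at hgN hhN
    obtain ⟨⟨A, rfl⟩, ⟨B, rfl⟩⟩ := And.intro hgN hhN
    exact map_mul (blockEmbed N) A B ▸ blockEmbed_mem_GLSet (A * B)
  inv_mem' {g} hg := by
    obtain ⟨N, hgN⟩ := hg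
    obtain ⟨A, rfl⟩ : g ∈ Set.range (blockEmbed N) := GLn_eq_range (K := K) ▸ hgN
    exact map_inv (blockEmbed N) A ▸ blockEmbed_mem_GLSet A⁻¹

section Poly

variable (K : Type) [Field K]

def polynomialMaps (σ M : Type) [AddCommMonoid M] [Module K M] : Submodule K ((σ → K) → M) :=
  Submodule.span K
    (Set.range fun p : MvPolynomial σ K × M => fun φ => MvPolynomial.eval φ p.1 • p.2)

variable {K} {σ M M' : Type} [AddCommMonoid M] [Module K M] [AddCommMonoid M'] [Module K M']

lemma eval_smul_mem_polynomialMaps (P : MvPolynomial σ K) (w : M) :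
    (fun φ => MvPolynomial.eval φ P • w) ∈ polynomialMaps K σ M :=
  Submodule.subset_span ⟨(P, w), rfl⟩

lemma LinearMap.comp_mem_polynomialMaps (L : M →ₗ[K] M') {Φ : (σ → K) → M}
    (hΦ : Φ ∈ polynomialMaps K σ M) : (fun φ => L (Φ φ)) ∈ polynomialMaps K σ M' := by
  have : (polynomialMaps K σ M).map (L.compLeft _) ≤ polynomialMaps K σ M' := by
    rw [polynomialMaps, Submodule.map_span, Submodule.span_le]
    rintro _ ⟨_, ⟨⟨P, w⟩, rfl⟩, rfl⟩
    have h : L.compLeft (σ → K) (fun φ => MvPolynomial.eval φ P • w) =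
        fun φ => MvPolynomial.eval φ P • L w := funext fun φ => map_smul L _ _
    exact h ▸ eval_smul_mem_polynomialMaps P (L w)
  exact this ⟨Φ, hΦ, rfl⟩

lemma exists_eval_eq_of_mem_polynomialMaps {Φ : (σ → K) → K} (hΦ : Φ ∈ polynomialMaps K σ K) :
    ∃ P : MvPolynomial σ K, ∀ φ, Φ φ = MvPolynomial.eval φ P := by
  let E : MvPolynomial σ K →ₗ[K] (σ → K) → K :=
    LinearMap.pi fun φ => (MvPolynomial.aeval φ).toLinearMap
  have : polynomialMaps K σ K ≤ LinearMap.range E := by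
    rw [polynomialMaps, Submodule.span_le]
    rintro _ ⟨⟨P, c⟩, rfl⟩
    exact ⟨c • P, funext fun φ => by simp [E, MvPolynomial.aeval_eq_eval, mul_comm]⟩
  obtain ⟨P, hP⟩ := this hΦ
  exact ⟨P, fun φ => by simp [← hP, E, MvPolynomial.aeval_eq_eval]⟩

lemma MultilinearMap.comp_mem_polynomialMaps {ι : Type} [Fintype ι] [DecidableEq ι]
    (f : MultilinearMap K (fun _ : ι => M) M') {Φ : ι → (σ → K) → M}
    (hΦ : ∀ i, Φ i ∈ polynomialMaps K σ M) :
    (fun φ => f fun i => Φ i φ) ∈ polynomialMaps K σ M' := by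
  choose n c g hg using fun i => Submodule.mem_span_set'.mp (hΦ i)
  choose p hp using fun i j => (g i j).2
  have hΦ' : ∀ i φ, Φ i φ = ∑ j, (c i j * MvPolynomial.eval φ (p i j).1) • (p i j).2 := by
    intro i φ
    simp [← hg i, ← hp, Finset.sum_apply, smul_smul]
  have : (fun φ => f fun i => Φ i φ) = ∑ r : ∀ i, Fin (n i),
      fun φ => MvPolynomial.eval φ (∏ i, MvPolynomial.C (c i (r i)) * (p i (r i)).1) •
        f fun i => (p i (r i)).2 := by
    funext φ
    simp only [hΦ', f.map_sum, f.map_smul_univ, Finset.sum_apply, map_prod, map_mul,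
      MvPolynomial.eval_C]
  rw [this]
  exact Submodule.sum_mem _ fun r _ => eval_smul_mem_polynomialMaps _ _

end Poly

section BlockPoly

variable {K : Type} [Field K] {N : ℕ}

lemma blockMap_apply_mem_polynomialMaps (v : Vec K) :
    (fun φ => blockMap N (Matrix.of (Function.curry φ)) v) ∈
      polynomialMaps K (Fin N × Fin N) (Vec K) := by
  have : (fun φ => blockMap N (Matrix.of (Function.curry φ)) v) =
      (fun φ => MvPolynomial.eval φ 1 • (v - Vec.extend N (Vec.restrict N v))) +
        ∑ p : Fin N × Fin N,
          fun φ => MvPolynomial.eval φ (MvPolynomial.X p) • (v p.2 • ee K p.1) := by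
    funext φ
    simp [blockMap_apply, Vec.extend, Fintype.linearCombination_apply, Matrix.mulVec, dotProduct,
      Finset.sum_smul, Fintype.sum_prod_type, smul_smul, Finset.sum_apply]
  rw [this]
  exact add_mem (eval_smul_mem_polynomialMaps _ _)
    (Submodule.sum_mem _ fun p _ => eval_smul_mem_polynomialMaps _ _)

lemma piTensorProductMap_blockMap_mem_polynomialMaps {d : ℕ} (t : ⨂[K] _ : Fin d, Vec K) :
    (fun φ => PiTensorProduct.map (fun _ => blockMap N (Matrix.of (Function.curry φ))) t) ∈
      polynomialMaps K (Fin N × Fin N) _ := by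
  induction t using PiTensorProduct.induction_on with
  | smul_tprod r v =>
    simp only [map_smul, PiTensorProduct.map_tprod]
    exact Submodule.smul_mem _ r ((PiTensorProduct.tprod K).comp_mem_polynomialMaps
      fun j => blockMap_apply_mem_polynomialMaps (v j))
  | add x y hx hy =>
    simp only [map_add]
    exact add_mem hx hy

lemma mapRange_blockMap_mem_polynomialMaps {ι : Type} (d : ι → ℕ)
    (t : DirectSum ι fun i => ⨂[K] _ : Fin (d i), Vec K) :
    (fun φ => DFinsupp.mapRange.linearMap (fun i => PiTensorProduct.map
      (fun _ : Fin (d i) => blockMap N (Matrix.of (Function.curry φ)))) t) ∈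
      polynomialMaps K (Fin N × Fin N) _ := by
  classical
  induction t using DirectSum.induction_on with
  | zero => exact zero_mem _
  | of i τ =>
    have h (F : ∀ i, (⨂[K] _ : Fin (d i), Vec K) →ₗ[K] ⨂[K] _ : Fin (d i), Vec K) :
        DFinsupp.mapRange.linearMap F (DirectSum.of _ i τ) =
          DFinsupp.lsingle (R := K) i (F i τ) :=
      DFinsupp.mapRange_single (hf := fun i => map_zero (F i))
    simp only [h]
    exact (DFinsupp.lsingle (M := fun i => ⨂[K] _ : Fin (d i), Vec K) i).comp_mem_polynomialMaps
      (piTensorProductMap_blockMap_mem_polynomialMaps τ)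
  | add x y hx hy =>
    simp only [map_add]
    exact add_mem hx hy

end BlockPoly

section Genericity

open MvPolynomial

variable {K : Type} [Field K] {M : Type} [AddCommGroup M] [Module K M]
  {ρ : (Vec K ≃ₗ[K] Vec K) → (M →ₗ[K] M)} {N : ℕ}

lemma IsPolyRep.exists_mvPolynomial_eval_eq (hρ : IsPolyRep K M ρ) (m : M) (ℓ : M →ₗ[K] K) :
    ∃ P : MvPolynomial (Fin N × Fin N) K, ∀ A : GL (Fin N) K,
      eval (fun ij => (A : Matrix (Fin N) (Fin N) K) ij.1 ij.2) P = ℓ (ρ (blockEmbed N A) m) := by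
  obtain ⟨ι, d, emb, hinj, hequiv⟩ := hρ
  -- `IsPolyRep` only equips the direct sum with its `AddCommMonoid` structure.
  let := Module.addCommMonoidToAddCommGroup K
    (M := DirectSum ι fun i => ⨂[K] _ : Fin (d i), Vec K)
  obtain ⟨S, hS⟩ := emb.exists_leftInverse_of_injective (LinearMap.ker_eq_bot_of_injective hinj)
  obtain ⟨P, hP⟩ := exists_eval_eq_of_mem_polynomialMaps ((ℓ ∘ₗ S).comp_mem_polynomialMaps
    (mapRange_blockMap_mem_polynomialMaps (N := N) d (emb m)))
  refine ⟨P, fun A => ?_⟩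
  calc _ = ℓ (S (DFinsupp.mapRange.linearMap
        (fun i => PiTensorProduct.map fun _ : Fin (d i) => (blockEmbed N A).toLinearMap)
          (emb m))) := by
        rw [toLinearMap_blockEmbed, ← hP]; rfl
    _ = ℓ (S (emb (ρ (blockEmbed N A) m))) := by rw [hequiv _ (blockEmbed_mem_GLSet A) m]
    _ = _ := by rw [← LinearMap.comp_apply S emb, hS, LinearMap.id_apply]

lemma IsPolyRep.exists_mvPolynomial_ne_zero_of_notMem (hρ : IsPolyRep K M ρ)
    {W : Submodule K M} {m : M} {A₀ : GL (Fin N) K} (hA₀ : ρ (blockEmbed N A₀) m ∉ W) :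
    ∃ P : MvPolynomial (Fin N × Fin N) K, P ≠ 0 ∧ ∀ A : GL (Fin N) K,
      eval (fun ij => (A : Matrix (Fin N) (Fin N) K) ij.1 ij.2) P ≠ 0 →
        ρ (blockEmbed N A) m ∉ W := by
  obtain ⟨ℓ, hℓ, hWℓ⟩ := Submodule.exists_le_ker_of_notMem hA₀
  obtain ⟨P, hP⟩ := hρ.exists_mvPolynomial_eval_eq m ℓ
  refine ⟨P, fun h => hℓ ?_, fun A hA hmem => hA ((hP A).trans (hWℓ hmem))⟩
  rw [← hP A₀, h, map_zero]

lemma IsPolyRep.exists_mem_GLSet_notMem_and_notMem [Infinite K] (hρ : IsPolyRep K M ρ)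
    {W : Submodule K M} {m m' : M} {g g' : Vec K ≃ₗ[K] Vec K} (hg : g ∈ GLSet K)
    (hg' : g' ∈ GLSet K) (hm : ρ g m ∉ W) (hm' : ρ g' m' ∉ W) :
    ∃ k ∈ GLSet K, ρ k m ∉ W ∧ ρ k m' ∉ W := by
  obtain ⟨N, hgN, hg'N⟩ := exists_mem_GLn_of_mem_GLSet hg hg'
  rw [GLn_eq_range] at hgN hg'N
  obtain ⟨⟨A, rfl⟩, ⟨A', rfl⟩⟩ := And.intro hgN hg'N
  obtain ⟨P, hP, hPW⟩ := hρ.exists_mvPolynomial_ne_zero_of_notMem hm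
  obtain ⟨P', hP', hP'W⟩ := hρ.exists_mvPolynomial_ne_zero_of_notMem hm'
  -- `GL_N` is Zariski dense in the matrices, so the nonzero `P * P'` does not vanish on it.
  obtain ⟨B, hB⟩ : ∃ B : GL (Fin N) K,
      eval (fun ij => (B : Matrix (Fin N) (Fin N) K) ij.1 ij.2) (P * P') ≠ 0 := by
    by_contra! h
    exact mul_ne_zero hP hP' (MvPolynomial.eq_of_eval_eq_on_gl fun B => by rw [h B, map_zero])
  rw [map_mul] at hB
  exact ⟨blockEmbed N B, blockEmbed_mem_GLSet B, hPW B (left_ne_zero_of_mul hB),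
    hP'W B (right_ne_zero_of_mul hB)⟩

end Genericity

section OrbitSpace

open PrimeSpectrum Topology

variable {K : Type} [Field K] {R : Type} [CommRing R] [Algebra K R]
  {act : (Vec K ≃ₗ[K] Vec K) → (R ≃ₐ[K] R)}

lemma mem_pt_asIdeal {g : Vec K ≃ₗ[K] Vec K} {x : PrimeSpectrum R} {f : R} :
    f ∈ (pt K R act g x).asIdeal ↔ act g f ∈ x.asIdeal :=
  Iff.rfl

lemma continuous_pt (g : Vec K ≃ₗ[K] Vec K) : Continuous (pt K R act g) :=
  PrimeSpectrum.continuous_comap _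

lemma GLStable.pt_mem_iff {S : Set (PrimeSpectrum R)} (hS : GLStable K R act S)
    {g : Vec K ≃ₗ[K] Vec K} (hg : g ∈ GLSet K) {x : PrimeSpectrum R} :
    pt K R act g x ∈ S ↔ x ∈ S := by
  rw [← Set.mem_preimage, hS g hg]

lemma GLStable.compl {S : Set (PrimeSpectrum R)} (hS : GLStable K R act S) :
    GLStable K R act Sᶜ := fun g hg => by rw [Set.preimage_compl, hS g hg]

lemma mem_orbitClosure_self (x : PrimeSpectrum R) : x ∈ orbitClosure K R act x :=
  fun _ hZ => hZ.2.2

lemma isClosed_orbitClosure (x : PrimeSpectrum R) : IsClosed (orbitClosure K R act x) :=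
  isClosed_sInter fun _ hZ => hZ.1

lemma glStable_orbitClosure (x : PrimeSpectrum R) : GLStable K R act (orbitClosure K R act x) :=
  fun g hg => by
    rw [orbitClosure, Set.preimage_sInter, Set.sInter_eq_biInter]
    exact Set.iInter₂_congr fun Z (hZ : _ ∧ _ ∧ _) => hZ.2.1 g hg

lemma orbitClosure_subset {x : PrimeSpectrum R} {Z : Set (PrimeSpectrum R)} (hZ : IsClosed Z)
    (hZs : GLStable K R act Z) (hx : x ∈ Z) : orbitClosure K R act x ⊆ Z :=
  Set.sInter_subset_of_mem ⟨hZ, hZs, hx⟩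

lemma orbitClosure_pt {g : Vec K ≃ₗ[K] Vec K} (hg : g ∈ GLSet K) (x : PrimeSpectrum R) :
    orbitClosure K R act (pt K R act g x) = orbitClosure K R act x := by
  have hst := glStable_orbitClosure (act := act)
  refine subset_antisymm (orbitClosure_subset (isClosed_orbitClosure x) (hst x) ?_)
    (orbitClosure_subset (isClosed_orbitClosure _) (hst _) ?_)
  · exact ((hst x).pt_mem_iff hg).mpr (mem_orbitClosure_self x)
  · exact ((hst _).pt_mem_iff hg).mp (mem_orbitClosure_self _)

lemma orbMap_pt {g : Vec K ≃ₗ[K] Vec K} (hg : g ∈ GLSet K) (x : PrimeSpectrum R) :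
    orbMap K R act (pt K R act g x) = orbMap K R act x :=
  Quotient.sound (orbitClosure_pt hg x)

lemma glStable_preimage_orbMap (S : Set (OrbSpace K R act)) :
    GLStable K R act (orbMap K R act ⁻¹' S) :=
  fun g hg => Set.ext fun x => by simp only [Set.mem_preimage, orbMap_pt hg x]

lemma isQuotientMap_orbMap : IsQuotientMap (orbMap K R act) := isQuotientMap_quotient_mk'

lemma preimage_image_orbMap_of_isClosed {Z : Set (PrimeSpectrum R)} (hZ : IsClosed Z)
    (hZs : GLStable K R act Z) : orbMap K R act ⁻¹' (orbMap K R act '' Z) = Z := by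
  refine subset_antisymm ?_ (Set.subset_preimage_image _ _)
  rintro y ⟨z, hz, hzy⟩
  have hyz : orbitClosure K R act y = orbitClosure K R act z := Quotient.exact hzy.symm
  exact orbitClosure_subset hZ hZs hz (hyz ▸ mem_orbitClosure_self y)

lemma preimage_closure_singleton_orbMap (x : PrimeSpectrum R) :
    orbMap K R act ⁻¹' closure {orbMap K R act x} = orbitClosure K R act x := by
  refine subset_antisymm ?_ (orbitClosure_subset
    (isClosed_closure.preimage isQuotientMap_orbMap.continuous)
    (glStable_preimage_orbMap _) (subset_closure rfl))
  have hsat := preimage_image_orbMap_of_isClosed (isClosed_orbitClosure x)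
    (glStable_orbitClosure (act := act) x)
  have hclosed : IsClosed (orbMap K R act '' orbitClosure K R act x) := by
    rw [← isQuotientMap_orbMap.isClosed_preimage, hsat]
    exact isClosed_orbitClosure x
  rw [← hsat]
  exact Set.preimage_mono (closure_minimal
    (Set.singleton_subset_iff.mpr ⟨x, mem_orbitClosure_self x, rfl⟩) hclosed)

instance : T0Space (OrbSpace K R act) := by
  refine t0Space_iff_inseparable _ |>.mpr fun a b hab => ?_
  obtain ⟨x, rfl⟩ := isQuotientMap_orbMap.surjective a
  obtain ⟨y, rfl⟩ := isQuotientMap_orbMap.surjective b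
  have := congrArg (orbMap K R act ⁻¹' ·) (inseparable_iff_closure_eq.mp hab)
  simp only [preimage_closure_singleton_orbMap] at this
  exact Quotient.sound this

namespace IsGLAlgebra

variable (halg : IsGLAlgebra K R act)
include halg

lemma pt_one (x : PrimeSpectrum R) : pt K R act 1 x = x := by
  ext f
  rw [mem_pt_asIdeal, halg.1]
  rfl

lemma pt_mul {g h : Vec K ≃ₗ[K] Vec K} (hg : g ∈ GLSet K) (hh : h ∈ GLSet K)
    (x : PrimeSpectrum R) : pt K R act (g * h) x = pt K R act h (pt K R act g x) := by
  ext f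
  rw [mem_pt_asIdeal, mem_pt_asIdeal, mem_pt_asIdeal, halg.2.1 g hg h hh]
  rfl

lemma glStable_iUnion_preimage_pt (U : Set (PrimeSpectrum R)) :
    GLStable K R act (⋃ g ∈ GLSet K, pt K R act g ⁻¹' U) := by
  intro h hh
  ext x
  simp only [Set.mem_preimage, Set.mem_iUnion, exists_prop]
  constructor
  · rintro ⟨g, hg, hx⟩
    exact ⟨h * g, (GLSubgroup K).mul_mem hh hg, by rwa [halg.pt_mul hh hg]⟩
  · rintro ⟨g, hg, hx⟩
    have hg' : h⁻¹ * g ∈ GLSet K := (GLSubgroup K).mul_mem ((GLSubgroup K).inv_mem hh) hg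
    refine ⟨h⁻¹ * g, hg', ?_⟩
    rwa [← halg.pt_mul hh hg', mul_inv_cancel_left]

lemma preimage_image_orbMap_of_isOpen {U : Set (PrimeSpectrum R)} (hU : IsOpen U) :
    orbMap K R act ⁻¹' (orbMap K R act '' U) = ⋃ g ∈ GLSet K, pt K R act g ⁻¹' U := by
  set W := ⋃ g ∈ GLSet K, pt K R act g ⁻¹' U
  have hW : IsOpen W := isOpen_biUnion fun g _ => hU.preimage (continuous_pt g)
  refine subset_antisymm ?_ ?_
  · rintro y ⟨z, hz, hzy⟩
    have hzW : z ∈ W :=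
      Set.mem_biUnion (GLSubgroup K).one_mem (by rwa [Set.mem_preimage, halg.pt_one])
    by_contra hyW
    have hyz : orbitClosure K R act y = orbitClosure K R act z := Quotient.exact hzy.symm
    exact orbitClosure_subset hW.isClosed_compl (halg.glStable_iUnion_preimage_pt U).compl hyW
      (hyz ▸ mem_orbitClosure_self z) hzW
  · exact Set.iUnion₂_subset fun g hg y hy => ⟨_, hy, orbMap_pt hg y⟩

lemma isOpenMap_orbMap : IsOpenMap (orbMap K R act) := fun U hU => by
  rw [← isQuotientMap_orbMap.isOpen_preimage, halg.preimage_image_orbMap_of_isOpen hU]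
  exact isOpen_biUnion fun g _ => hU.preimage (continuous_pt g)

lemma isTopologicalBasis_image_basicOpen :
    TopologicalSpace.IsTopologicalBasis
      (Set.range fun f : R => orbMap K R act '' basicOpen f) := by
  have := isTopologicalBasis_basic_opens.isQuotientMap isQuotientMap_orbMap halg.isOpenMap_orbMap
  rwa [← Set.range_comp] at this

lemma image_basicOpen_mul [Infinite K] (f h : R) :
    orbMap K R act '' basicOpen (f * h) =
      orbMap K R act '' basicOpen f ∩ orbMap K R act '' basicOpen h := by
  refine subset_antisymm (by rw [basicOpen_mul]; exact Set.image_inter_subset _ _ _) ?_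
  rintro _ ⟨⟨y, hy, rfl⟩, hyh⟩
  rw [← Set.mem_preimage, halg.preimage_image_orbMap_of_isOpen (basicOpen h).isOpen] at hyh
  obtain ⟨g, hg, hgy⟩ := Set.mem_iUnion₂.mp hyh
  obtain ⟨k, hk, hkf, hkh⟩ := halg.2.2.exists_mem_GLSet_notMem_and_notMem
    (W := y.asIdeal.restrictScalars K) (GLSubgroup K).one_mem hg
    (show act 1 f ∉ y.asIdeal by rwa [halg.1]) hgy
  refine ⟨pt K R act k y, ?_, orbMap_pt hk y⟩
  rw [basicOpen_mul]
  exact ⟨hkf, hkh⟩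

lemma isPreirreducible_preimage_orbMap [Infinite K] {S : Set (OrbSpace K R act)}
    (hS : IsPreirreducible S) : IsPreirreducible (orbMap K R act ⁻¹' S) := by
  rintro u v hu hv ⟨y, hyS, hyu⟩ ⟨z, hzS, hzv⟩
  obtain ⟨_, ⟨f, rfl⟩, hyf, hfu⟩ := isTopologicalBasis_basic_opens.exists_subset_of_mem_open hyu hu
  obtain ⟨_, ⟨h, rfl⟩, hzh, hhv⟩ := isTopologicalBasis_basic_opens.exists_subset_of_mem_open hzv hv
  obtain ⟨_, hwS, w, hw, rfl⟩ : (S ∩ orbMap K R act '' basicOpen (f * h)).Nonempty := by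
    rw [halg.image_basicOpen_mul]
    exact hS _ _ (halg.isOpenMap_orbMap _ (basicOpen f).isOpen)
      (halg.isOpenMap_orbMap _ (basicOpen h).isOpen) ⟨_, hyS, y, hyf, rfl⟩ ⟨_, hzS, z, hzh, rfl⟩
  rw [basicOpen_mul] at hw
  exact ⟨w, hwS, hfu hw.1, hhv hw.2⟩

lemma quasiSober_orbSpace [Infinite K] : QuasiSober (OrbSpace K R act) := by
  refine ⟨fun {C} hC hCc => ?_⟩
  have hπ := isQuotientMap_orbMap (act := act)
  have hZ : IsIrreducible (orbMap K R act ⁻¹' C) :=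
    ⟨hC.nonempty.preimage hπ.surjective, halg.isPreirreducible_preimage_orbMap hC.isPreirreducible⟩
  obtain ⟨ξ, hξ⟩ := QuasiSober.sober hZ (hCc.preimage hπ.continuous)
  refine ⟨orbMap K R act ξ, subset_antisymm
    (closure_minimal (Set.singleton_subset_iff.mpr hξ.mem) hCc) ?_⟩
  calc C = orbMap K R act '' closure {ξ} := by rw [hξ, Set.image_preimage_eq C hπ.surjective]
    _ ⊆ closure {orbMap K R act ξ} := by
      simpa only [Set.image_singleton] using
        image_closure_subset_closure_image (s := {ξ}) hπ.continuous

end IsGLAlgebra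

lemma isCompact_image_basicOpen (f : R) : IsCompact (orbMap K R act '' basicOpen f) :=
  (isCompact_basicOpen f).image isQuotientMap_orbMap.continuous

end OrbitSpace

/-- For an affine `GL`-scheme `X = Spec R`, the orbit space `X^orb` (the set of
generalized orbits with the quotient topology) is a spectral topological space: it is
sober, its quasi-compact open subsets form a basis of the topology, and the
intersection of any two quasi-compact open subsets is quasi-compact. -/
theorem orbSpace_spectral
    (K : Type) [Field K] [CharZero K]
    (R : Type) [CommRing R] [Algebra K R]
    (act : (Vec K ≃ₗ[K] Vec K) → (R ≃ₐ[K] R))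
    (halg : IsGLAlgebra K R act) :
    QuasiSober (OrbSpace K R act) ∧ T0Space (OrbSpace K R act) ∧
    TopologicalSpace.IsTopologicalBasis
      {U : Set (OrbSpace K R act) | IsOpen U ∧ IsCompact U} ∧
    (∀ U V : Set (OrbSpace K R act), IsOpen U → IsCompact U → IsOpen V → IsCompact V →
      IsCompact (U ∩ V)) := by
  have hbasis := halg.isTopologicalBasis_image_basicOpen
  have : PrespectralSpace (OrbSpace K R act) :=
    .of_isTopologicalBasis' hbasis isCompact_image_basicOpen
  have : QuasiSeparatedSpace (OrbSpace K R act) := .of_isTopologicalBasis hbasis fun f h => by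
    rw [← halg.image_basicOpen_mul]
    exact isCompact_image_basicOpen (f * h)
  exact ⟨halg.quasiSober_orbSpace, inferInstance, PrespectralSpace.isTopologicalBasis,
    fun U V hU hUc hV hVc => hUc.inter_of_isOpen hVc hU hV⟩
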